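/- arXiv:1611.01355 — 2 statements merged into one kernel-verified Lean document; each statement's English description precedes it below -/
import Mathlib

section
/- Let X and Y be pre-Riesz spaces and T: X → Y a bipositive Riesz* homomorphism. Then for all x, y ∈ X: x ⊥ y if and only if Tx ⊥ Ty. -/
/-!
`x ⊥ y` says that the pairs `{x + y, -(x + y)}` and `{x - y, -(x - y)}` have the same upper
bounds. For finite nonempty sets, `s^u ⊆ t^u` means `t ⊆ s^ul`, which a Riesz* homomorphism
carries over to `T t ⊆ (T s)^ul`, i.e. `(T s)^u ⊆ (T t)^u`; conversely a bipositive linear map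
is an order embedding, so it reflects inclusions of upper bound sets of images.
-/

/-- Disjointness in a partially ordered vector space. -/
def PDisj {X : Type*} [AddCommGroup X] [PartialOrder X] (x y : X) : Prop :=
  upperBounds {x + y, -x - y} = upperBounds {x - y, -x + y}

theorem pdisj_iff {X : Type*} [AddCommGroup X] [PartialOrder X] (x y : X) :
    PDisj x y ↔ upperBounds {x + y, -(x + y)} = upperBounds {x - y, -(x - y)} := by
  rw [PDisj, neg_add, neg_sub, ← sub_eq_add_neg, neg_add_eq_sub]

section Bounds

variable {α β : Type*} [Preorder α] [Preorder β]

def IsRieszStarHom (f : α → β) : Prop :=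
  ∀ M : Set α, M.Nonempty → M.Finite →
    f '' lowerBounds (upperBounds M) ⊆ lowerBounds (upperBounds (f '' M))

theorem IsRieszStarHom.upperBounds_image_subset {f : α → β} (hf : IsRieszStarHom f)
    {s t : Set α} (hs : s.Nonempty) (hsf : s.Finite) (h : upperBounds s ⊆ upperBounds t) :
    upperBounds (f '' s) ⊆ upperBounds (f '' t) := by
  have ht : t ⊆ lowerBounds (upperBounds s) := fun _ ha _ hb => h hb ha
  have hft : f '' t ⊆ lowerBounds (upperBounds (f '' s)) :=
    (Set.image_mono ht).trans (hf s hs hsf)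
  exact fun _ hb _ ha => hft ha hb

theorem mem_upperBounds_image_iff_of_map_le_map_iff {f : α → β}
    (hf : ∀ a b, f a ≤ f b ↔ a ≤ b) {s : Set α} {a : α} :
    f a ∈ upperBounds (f '' s) ↔ a ∈ upperBounds s := by
  simp [upperBounds, hf]

theorem upperBounds_subset_of_image_subset {f : α → β} (hf : ∀ a b, f a ≤ f b ↔ a ≤ b)
    {s t : Set α} (h : upperBounds (f '' s) ⊆ upperBounds (f '' t)) :
    upperBounds s ⊆ upperBounds t := fun _ ha =>
  (mem_upperBounds_image_iff_of_map_le_map_iff hf).1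
    (h ((mem_upperBounds_image_iff_of_map_le_map_iff hf).2 ha))

end Bounds

theorem map_le_map_iff_of_nonneg_iff {X Y F : Type*}
    [AddCommGroup X] [PartialOrder X] [IsOrderedAddMonoid X]
    [AddCommGroup Y] [PartialOrder Y] [IsOrderedAddMonoid Y]
    [FunLike F X Y] [AddMonoidHomClass F X Y] {T : F} (hT : ∀ x : X, 0 ≤ x ↔ 0 ≤ T x)
    (a b : X) : T a ≤ T b ↔ a ≤ b := by
  rw [← sub_nonneg, ← map_sub, ← hT, sub_nonneg]

theorem stmt12_general {X Y : Type*}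
    [AddCommGroup X] [PartialOrder X] [IsOrderedAddMonoid X] [Module ℝ X]
    [AddCommGroup Y] [PartialOrder Y] [IsOrderedAddMonoid Y] [Module ℝ Y]
    (T : X →ₗ[ℝ] Y) (hbi : ∀ x : X, 0 ≤ x ↔ 0 ≤ T x)
    (hRiesz : ∀ M : Set X, M.Nonempty → M.Finite →
      T '' (lowerBounds (upperBounds M)) ⊆ lowerBounds (upperBounds (T '' M)))
    (x y : X) : PDisj x y ↔ PDisj (T x) (T y) := by
  have hRieszStar : IsRieszStarHom T := hRiesz
  have hTle := map_le_map_iff_of_nonneg_iff hbi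
  have himage (a : X) : T '' {a, -a} = {T a, -T a} := by rw [Set.image_pair, map_neg]
  rw [pdisj_iff, pdisj_iff, ← map_add, ← map_sub, ← himage, ← himage]
  constructor
  · intro h
    exact (hRieszStar.upperBounds_image_subset (Set.insert_nonempty _ _) (Set.toFinite _)
      h.le).antisymm
      (hRieszStar.upperBounds_image_subset (Set.insert_nonempty _ _) (Set.toFinite _) h.ge)
  · intro h
    exact (upperBounds_subset_of_image_subset hTle h.le).antisymm
      (upperBounds_subset_of_image_subset hTle h.ge)

/-- A bipositive Riesz* homomorphism between pre-Riesz spaces preserves and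
reflects disjointness. -/
theorem stmt12 {X Y : Type*}
    [AddCommGroup X] [PartialOrder X] [IsOrderedAddMonoid X] [Module ℝ X]
    [PosSMulStrictMono ℝ X]
    [AddCommGroup Y] [PartialOrder Y] [IsOrderedAddMonoid Y] [Module ℝ Y]
    [PosSMulStrictMono ℝ Y]
    (hprX : ∀ x y z : X, upperBounds {x + y, x + z} ⊆ upperBounds {y, z} → 0 ≤ x)
    (hprY : ∀ x y z : Y, upperBounds {x + y, x + z} ⊆ upperBounds {y, z} → 0 ≤ x)
    (T : X →ₗ[ℝ] Y) (hbi : ∀ x : X, 0 ≤ x ↔ 0 ≤ T x)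
    (hRiesz : ∀ M : Set X, M.Nonempty → M.Finite →
      T '' (lowerBounds (upperBounds M)) ⊆ lowerBounds (upperBounds (T '' M)))
    (x y : X) : PDisj x y ↔ PDisj (T x) (T y) :=
  stmt12_general T hbi hRiesz x y
end

section
/- Let X be a pre-Riesz space and T: D(T) ⊆ X → X a bijective linear operator such that the inclusion map D(T) → X is a Riesz* homomorphism. If T and T⁻¹ are both positive and T is local, then T⁻¹ is local. -/
open Set

lemma mem_upperBounds_pair {α : Type*} [Preorder α] {a b c : α} :
    c ∈ upperBounds {a, b} ↔ a ≤ c ∧ b ≤ c := by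
  simp [upperBounds_insert]

section

variable {X : Type*} [AddCommGroup X] [PartialOrder X]

def RieszStarInclusion (D : Set X) : Prop :=
  ∀ M ⊆ D, M.Nonempty → M.Finite →
    {z : X | z ∈ D ∧ ∀ u ∈ D, (∀ m ∈ M, m ≤ u) → z ≤ u} ⊆ lowerBounds (upperBounds M)

lemma pdisj_iff_upperBounds_pair_neg {x y : X} :
    PDisj x y ↔ upperBounds {x + y, -(x + y)} = upperBounds {x - y, -(x - y)} := by
  rw [PDisj, neg_add', neg_sub, neg_add_eq_sub]

lemma PDisj.symm {x y : X} (h : PDisj x y) : PDisj y x := by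
  rw [pdisj_iff_upperBounds_pair_neg] at h ⊢
  rw [add_comm y x, ← neg_sub x y, neg_neg, pair_comm (-(x - y))]
  exact h

namespace RieszStarInclusion

variable {D : AddSubgroup X}

lemma upperBounds_pair_neg_subset (hD : RieszStarInclusion (D : Set X)) {a b : X}
    (ha : a ∈ D) (hb : b ∈ D)
    (h : upperBounds {a, -a} ∩ D ⊆ upperBounds {b, -b}) :
    upperBounds {a, -a} ⊆ upperBounds {b, -b} := by
  have hM : ({a, -a} : Set X) ⊆ D := pair_subset ha (D.neg_mem ha)
  have hlow : ∀ c ∈ ({b, -b} : Set X), c ∈ lowerBounds (upperBounds {a, -a}) := by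
    intro c hc
    refine hD _ hM (insert_nonempty _ _) (toFinite _) ⟨?_, fun u hu hub => h ⟨hub, hu⟩ hc⟩
    rcases hc with rfl | rfl
    exacts [hb, D.neg_mem hb]
  exact fun w hw c hc => hlow c hc hw

lemma upperBounds_pair_neg_eq (hD : RieszStarInclusion (D : Set X)) {a b : X}
    (ha : a ∈ D) (hb : b ∈ D)
    (h : upperBounds {a, -a} ∩ D = upperBounds {b, -b} ∩ D) :
    upperBounds {a, -a} = upperBounds {b, -b} :=
  (hD.upperBounds_pair_neg_subset ha hb (h ▸ inter_subset_left)).antisymm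
    (hD.upperBounds_pair_neg_subset hb ha (h ▸ inter_subset_left))

/-- `hST` says that `S : X → D` is an order isomorphism, with inverse `T`, for the order `D`
inherits from `X`. -/
lemma pdisj_map (hD : RieszStarInclusion (D : Set X))
    (S : X →+ X) (T : X → X) (hSD : ∀ a, S a ∈ D) (hST : ∀ a, ∀ u ∈ D, S a ≤ u ↔ a ≤ T u)
    {x y : X} (h : PDisj x y) : PDisj (S x) (S y) := by
  have hub : ∀ c, upperBounds {S c, -S c} ∩ D = T ⁻¹' upperBounds {c, -c} ∩ D := by
    intro c
    ext u
    simp only [mem_inter_iff, mem_preimage, mem_upperBounds_pair, SetLike.mem_coe]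
    constructor
    · rintro ⟨⟨h₁, h₂⟩, hu⟩
      exact ⟨⟨(hST c u hu).1 h₁, (hST (-c) u hu).1 (by rwa [map_neg])⟩, hu⟩
    · rintro ⟨⟨h₁, h₂⟩, hu⟩
      exact ⟨⟨(hST c u hu).2 h₁, by rw [← map_neg]; exact (hST (-c) u hu).2 h₂⟩, hu⟩
  rw [pdisj_iff_upperBounds_pair_neg] at h ⊢
  rw [← map_add, ← map_sub]
  exact hD.upperBounds_pair_neg_eq (hSD _) (hSD _) (by rw [hub, hub, h])

end RieszStarInclusion

lemma map_add_of_inverse {G : Type*} [AddCommGroup G] {D : AddSubgroup G} {T S : G → G}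
    (hTadd : ∀ x ∈ D, ∀ y ∈ D, T (x + y) = T x + T y)
    (hS : ∀ y : G, S y ∈ D ∧ T (S y) = y) (hST : ∀ x ∈ D, S (T x) = x) (a b : G) :
    S (a + b) = S a + S b := by
  have h : T (S a + S b) = a + b := by rw [hTadd _ (hS a).1 _ (hS b).1, (hS a).2, (hS b).2]
  rw [← h, hST _ (D.add_mem (hS a).1 (hS b).1)]

lemma le_iff_le_of_inverse [IsOrderedAddMonoid X] {D : AddSubgroup X} {T S : X → X}
    (hTadd : ∀ x ∈ D, ∀ y ∈ D, T (x + y) = T x + T y)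
    (hS : ∀ y : X, S y ∈ D ∧ T (S y) = y) (hST : ∀ x ∈ D, S (T x) = x)
    (hTpos : ∀ x ∈ D, 0 ≤ x → 0 ≤ T x) (hSpos : ∀ y : X, 0 ≤ y → 0 ≤ S y)
    (a : X) {u : X} (hu : u ∈ D) : S a ≤ u ↔ a ≤ T u := by
  let S' : X →+ X := AddMonoidHom.mk' S (map_add_of_inverse hTadd hS hST)
  have hSmono : Monotone S' := (monotone_iff_map_nonneg S').2 hSpos
  constructor
  · intro hle
    have hdiff : u - S a ∈ D := D.sub_mem hu (hS a).1
    have hT : T u = T (S a) + T (u - S a) := by rw [← hTadd _ (hS a).1 _ hdiff, add_sub_cancel]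
    rw [hT, (hS a).2]
    exact le_add_of_nonneg_right (hTpos _ hdiff (sub_nonneg.2 hle))
  · intro hle
    simpa only [S', AddMonoidHom.mk'_apply, hST u hu] using hSmono hle

end

theorem stmt13_general {X : Type*} [AddCommGroup X] [PartialOrder X] [IsOrderedAddMonoid X] [Module ℝ X]
    (D : Submodule ℝ X) (T S : X → X)
    (hTadd : ∀ x ∈ D, ∀ y ∈ D, T (x + y) = T x + T y)
    -- `S` is the (two-sided) inverse of `T : D → X`:
    (hS : ∀ y : X, S y ∈ D ∧ T (S y) = y)
    (hST : ∀ x ∈ D, S (T x) = x)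
    -- the inclusion map `D → X` is a Riesz* homomorphism:
    (hincl : ∀ M : Set X, M ⊆ (D : Set X) → M.Nonempty → M.Finite →
      {z : X | z ∈ D ∧ ∀ u ∈ D, (∀ m ∈ M, m ≤ u) → z ≤ u} ⊆
        lowerBounds (upperBounds M))
    -- `T` and `T⁻¹` are positive:
    (hTpos : ∀ x ∈ D, 0 ≤ x → 0 ≤ T x)
    (hSpos : ∀ y : X, 0 ≤ y → 0 ≤ S y)
    -- `T` is local:
    (hTloc : ∀ x ∈ D, ∀ y : X, PDisj x y → PDisj (T x) y) :
    ∀ (x y : X), PDisj x y → PDisj (S x) y := by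
  intro x y hxy
  have hD : RieszStarInclusion (D.toAddSubgroup : Set X) := hincl
  have hSadd := map_add_of_inverse (D := D.toAddSubgroup) hTadd hS hST
  have hSxy : PDisj (S x) (S y) :=
    hD.pdisj_map (AddMonoidHom.mk' S hSadd) T (fun a => (hS a).1)
      (fun a _ hu => le_iff_le_of_inverse (D := D.toAddSubgroup) hTadd hS hST hTpos hSpos a hu)
      hxy
  have hySx : PDisj (T (S y)) (S x) := hTloc (S y) (hS y).1 (S x) hSxy.symm
  rw [(hS y).2] at hySx
  exact hySx.symm

/-- Let `X` be a pre-Riesz space and `T : D(T) ⊆ X → X` a bijective linear operator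
(with inverse `S`) such that the inclusion map `D(T) → X` is a Riesz* homomorphism.
If `T` and `T⁻¹` are positive and `T` is local, then `T⁻¹` is local. -/
theorem stmt13 {X : Type*} [AddCommGroup X] [PartialOrder X] [IsOrderedAddMonoid X] [Module ℝ X] [PosSMulStrictMono ℝ X]
    (hpr : ∀ x y z : X, upperBounds {x + y, x + z} ⊆ upperBounds {y, z} → 0 ≤ x)
    (D : Submodule ℝ X) (T S : X → X)
    (hTadd : ∀ x ∈ D, ∀ y ∈ D, T (x + y) = T x + T y)
    (hTsmul : ∀ (c : ℝ), ∀ x ∈ D, T (c • x) = c • T x)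
    -- `S` is the (two-sided) inverse of `T : D → X`:
    (hS : ∀ y : X, S y ∈ D ∧ T (S y) = y)
    (hST : ∀ x ∈ D, S (T x) = x)
    -- the inclusion map `D → X` is a Riesz* homomorphism:
    (hincl : ∀ M : Set X, M ⊆ (D : Set X) → M.Nonempty → M.Finite →
      {z : X | z ∈ D ∧ ∀ u ∈ D, (∀ m ∈ M, m ≤ u) → z ≤ u} ⊆
        lowerBounds (upperBounds M))
    -- `T` and `T⁻¹` are positive:
    (hTpos : ∀ x ∈ D, 0 ≤ x → 0 ≤ T x)
    (hSpos : ∀ y : X, 0 ≤ y → 0 ≤ S y)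
    -- `T` is local:
    (hTloc : ∀ x ∈ D, ∀ y : X, PDisj x y → PDisj (T x) y) :
    ∀ (x y : X), PDisj x y → PDisj (S x) y :=
  stmt13_general D T S hTadd hS hST hincl hTpos hSpos hTloc
end
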